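/- Let φ, φ̃ : M → N be two polyharmonic maps of even order k = 2s ≥ 4 with corresponding local variables u_ℓ, v_ℓ and ũ_ℓ, ṽ_ℓ, and local right-hand sides F^k and F̃^k. Then on any open set D whose closure is compact and contained in the chart domain, there exists a constant C > 0 such that |(F^k)^α − (F̃^k)^α| ≤ C( |φ − φ̃| + |dφ − dφ̃| + Σ_{ℓ=0}^{k−2} |u_ℓ − ũ_ℓ| + Σ_{ℓ=0}^{k−3} |v_ℓ − ṽ_ℓ| + |∇u_{k−2} − ∇ũ_{k−2}| ). -/

import Mathlib

noncomputable section

open scoped BigOperators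

namespace Polyharm

/-- Partial derivative of a scalar function on `ℝ^d` in the `i`-th coordinate direction. -/
def pd {d : ℕ} (i : Fin d) (f : (Fin d → ℝ) → ℝ) (x : Fin d → ℝ) : ℝ :=
  fderiv ℝ f x (Pi.single i 1)

/-- Euclidean norm of a finite family of real numbers. -/
def vnorm {ι : Type} [Fintype ι] (f : ι → ℝ) : ℝ :=
  Real.sqrt (∑ i, f i ^ 2)

/-- Local-coordinate data for maps between Riemannian manifolds: the inverse metric
`g^{ij}` and the Christoffel symbols `Γ^k_{ij}` of a chart of the domain `(M,g)`, and
the Christoffel symbols `Γ^α_{βγ}` of a chart of the target `(N,h)`. -/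
structure ChartData (m n : ℕ) where
  ginv : (Fin m → ℝ) → Fin m → Fin m → ℝ
  ΓM : (Fin m → ℝ) → Fin m → Fin m → Fin m → ℝ
  ΓN : (Fin n → ℝ) → Fin n → Fin n → Fin n → ℝ

variable {m n : ℕ}

/-- Smoothness of the domain data. -/
def ChartData.SmoothDomain (P : ChartData m n) : Prop :=
  (∀ i j, ContDiff ℝ (⊤ : ℕ∞) fun x => P.ginv x i j) ∧
  (∀ k i j, ContDiff ℝ (⊤ : ℕ∞) fun x => P.ΓM x k i j)

/-- Smoothness of the target Christoffel symbols. -/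
def ChartData.SmoothTarget (P : ChartData m n) : Prop :=
  ∀ α β γ, ContDiff ℝ (⊤ : ℕ∞) fun y => P.ΓN y α β γ

/-- The chart data comes from Riemannian metrics: `g^{ij}` is symmetric and positive
definite, and the Christoffel symbols are symmetric in their lower indices. -/
def ChartData.Riemannian (P : ChartData m n) : Prop :=
  (∀ x i j, P.ginv x i j = P.ginv x j i) ∧
  (∀ x (v : Fin m → ℝ), v ≠ 0 → 0 < ∑ i, ∑ j, P.ginv x i j * v i * v j) ∧
  (∀ x k i j, P.ΓM x k i j = P.ΓM x k j i) ∧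
  (∀ y α β γ, P.ΓN y α β γ = P.ΓN y α γ β)

/-- The Laplace–Beltrami operator on scalar functions:
`-Δ f = g^{ij} ∂²f/∂x^i∂x^j - g^{ij} Γ^k_{ij} ∂f/∂x^k`. -/
def lap (P : ChartData m n) (f : (Fin m → ℝ) → ℝ) (x : Fin m → ℝ) : ℝ :=
  -((∑ i, ∑ j, P.ginv x i j * pd i (fun z => pd j f z) x)
    - ∑ i, ∑ j, ∑ k, P.ginv x i j * P.ΓM x k i j * pd k f x)

/-- `φ_i^β = ∂φ^β/∂x^i`. -/
def dphi (φ : (Fin m → ℝ) → Fin n → ℝ) (x : Fin m → ℝ) (i : Fin m) (β : Fin n) : ℝ :=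
  pd i (fun z => φ z β) x

/-- `⟨dφ^β, dψ^γ⟩ = g^{ij} φ_i^β ψ_j^γ`. -/
def dpair (P : ChartData m n) (φ ψ : (Fin m → ℝ) → Fin n → ℝ) (x : Fin m → ℝ)
    (β γ : Fin n) : ℝ :=
  ∑ i, ∑ j, P.ginv x i j * dphi φ x i β * dphi ψ x j γ

/-- Components `R^α_{δβγ}` of the curvature tensor of the target, with the sign
convention `R(∂/∂y^β, ∂/∂y^γ)∂/∂y^δ = R^α_{δβγ} ∂/∂y^α` of the paper. -/
def Rc (P : ChartData m n) (y : Fin n → ℝ) (α δ β γ : Fin n) : ℝ :=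
  pd β (fun z => P.ΓN z α γ δ) y - pd γ (fun z => P.ΓN z α β δ) y
    + ∑ μ, (P.ΓN y α β μ * P.ΓN y μ γ δ - P.ΓN y α γ μ * P.ΓN y μ β δ)

/-- `2S^α_{βωϑ} = ∂Γ^α_{βϑ}/∂y^ω + Γ^γ_{βϑ}Γ^α_{ωγ} + ∂Γ^α_{ωϑ}/∂y^β + Γ^γ_{ωϑ}Γ^α_{βγ}`. -/
def Scoef (P : ChartData m n) (y : Fin n → ℝ) (α β ω ϑ : Fin n) : ℝ :=
  (pd ω (fun z => P.ΓN z α β ϑ) y + (∑ γ, P.ΓN y γ β ϑ * P.ΓN y α ω γ)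
    + pd β (fun z => P.ΓN z α ω ϑ) y + ∑ γ, P.ΓN y γ ω ϑ * P.ΓN y α β γ) / 2

/-- The operator
`A^α(η,ξ) = ξ_i^ϑ(-2 g^{ij} φ_j^β Γ^α_{βϑ}) + η^ϑ((Δφ^β)Γ^α_{βϑ} - g^{ij} φ_j^β φ_i^ω S^α_{βωϑ})`. -/
def Aop (P : ChartData m n) (φ : (Fin m → ℝ) → Fin n → ℝ) (η : Fin n → ℝ)
    (ξ : Fin m → Fin n → ℝ) (x : Fin m → ℝ) (α : Fin n) : ℝ :=
  (∑ ϑ, ∑ i, ξ i ϑ * (-2 * ∑ j, ∑ β, P.ginv x i j * dphi φ x j β * P.ΓN (φ x) α β ϑ))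
    + ∑ ϑ, η ϑ * ((∑ β, lap P (fun z => φ z β) x * P.ΓN (φ x) α β ϑ)
        - ∑ i, ∑ j, ∑ β, ∑ ω,
            P.ginv x i j * dphi φ x j β * dphi φ x i ω * Scoef P (φ x) α β ω ϑ)

/-- The operator `A` applied to (the components of) a section `σ` of `φ⁻¹TN`:
`A(σ, ∂σ)`. -/
def Asec (P : ChartData m n) (φ σ : (Fin m → ℝ) → Fin n → ℝ) (x : Fin m → ℝ)
    (α : Fin n) : ℝ :=
  Aop P φ (σ x) (fun i ϑ => pd i (fun z => σ z ϑ) x) x α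

/-- Components of the tension field `τ^α(φ) = -Δφ^α + g^{ij} Γ^α_{ϑβ} φ_i^ϑ φ_j^β`. -/
def tension (P : ChartData m n) (φ : (Fin m → ℝ) → Fin n → ℝ) (x : Fin m → ℝ)
    (α : Fin n) : ℝ :=
  -(lap P (fun z => φ z α) x)
    + ∑ i, ∑ j, ∑ ϑ, ∑ β,
        P.ginv x i j * P.ΓN (φ x) α ϑ β * dphi φ x i ϑ * dphi φ x j β

/-- The components `u_j` of `Δ̄^j τ(φ)`: `u_0 = τ(φ)` and
`u_{j+1} = Δ u_j + A(u_j, ∂u_j)` (local expression of the rough Laplacian). -/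
def uvar (P : ChartData m n) (φ : (Fin m → ℝ) → Fin n → ℝ) :
    ℕ → (Fin m → ℝ) → Fin n → ℝ
  | 0 => tension P φ
  | j+1 => fun x α => lap P (fun z => uvar P φ j z α) x + Asec P φ (uvar P φ j) x α

/-- `v_j = du_j`, i.e. `v_{j i}^α = ∂u_j^α/∂x^i`. -/
def vvar (P : ChartData m n) (φ : (Fin m → ℝ) → Fin n → ℝ) (j : ℕ) (x : Fin m → ℝ)
    (i : Fin m) (α : Fin n) : ℝ :=
  pd i (fun z => uvar P φ j z α) x

/-- Components of the pull-back covariant derivative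
`(∇̄_{∂_i} σ)^γ = ∂σ^γ/∂x^i + Γ^γ_{βδ}(φ) φ_i^β σ^δ`. -/
def covD (P : ChartData m n) (φ σ : (Fin m → ℝ) → Fin n → ℝ) (i : Fin m)
    (x : Fin m → ℝ) (γ : Fin n) : ℝ :=
  pd i (fun z => σ z γ) x + ∑ β, ∑ δ, P.ΓN (φ x) γ β δ * dphi φ x i β * σ x δ

/-- `(Tr_g R^N(X, dφ(·))dφ(·))^α`. -/
def trRphi (P : ChartData m n) (φ X : (Fin m → ℝ) → Fin n → ℝ) (x : Fin m → ℝ)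
    (α : Fin n) : ℝ :=
  ∑ i, ∑ j, ∑ β, ∑ γ, ∑ δ,
    P.ginv x i j * Rc P (φ x) α δ β γ * X x β * dphi φ x i γ * dphi φ x j δ

/-- `(Tr_g R^N(dφ(·), X)dφ(·))^α`. -/
def trRphi2 (P : ChartData m n) (φ X : (Fin m → ℝ) → Fin n → ℝ) (x : Fin m → ℝ)
    (α : Fin n) : ℝ :=
  ∑ i, ∑ j, ∑ β, ∑ γ, ∑ δ,
    P.ginv x i j * Rc P (φ x) α δ β γ * dphi φ x i β * X x γ * dphi φ x j δ

/-- `(Tr_g R^N(∇̄_{(·)}W, Z)dφ(·))^α`. -/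
def trRD (P : ChartData m n) (φ W Z : (Fin m → ℝ) → Fin n → ℝ) (x : Fin m → ℝ)
    (α : Fin n) : ℝ :=
  ∑ i, ∑ j, ∑ β, ∑ γ, ∑ δ,
    P.ginv x i j * Rc P (φ x) α δ β γ * covD P φ W i x β * Z x γ * dphi φ x j δ

/-- `(Tr_g R^N(W, ∇̄_{(·)}Z)dφ(·))^α`. -/
def trRD2 (P : ChartData m n) (φ W Z : (Fin m → ℝ) → Fin n → ℝ) (x : Fin m → ℝ)
    (α : Fin n) : ℝ :=
  ∑ i, ∑ j, ∑ β, ∑ γ, ∑ δ,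
    P.ginv x i j * Rc P (φ x) α δ β γ * W x β * covD P φ Z i x γ * dphi φ x j δ

/-- Local components of Maeta's `k`-tension field `τ_k(φ)`, for `k = 2s`:
`τ_{2s}(φ) = Δ̄^{2s-1}τ(φ) - R^N(Δ̄^{2s-2}τ(φ), dφ(e_j))dφ(e_j)
  - Σ_{ℓ=1}^{s-1}( R^N(∇̄_{e_j}Δ̄^{s+ℓ-2}τ(φ), Δ̄^{s-ℓ-1}τ(φ))dφ(e_j)
                 - R^N(Δ̄^{s+ℓ-2}τ(φ), ∇̄_{e_j}Δ̄^{s-ℓ-1}τ(φ))dφ(e_j) )`,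
and for `k = 2s+1`:
`τ_{2s+1}(φ) = Δ̄^{2s}τ(φ) - R^N(Δ̄^{2s-1}τ(φ), dφ(e_j))dφ(e_j)
  - Σ_{ℓ=1}^{s-1}( R^N(∇̄_{e_j}Δ̄^{s+ℓ-1}τ(φ), Δ̄^{s-ℓ-1}τ(φ))dφ(e_j)
                 - R^N(Δ̄^{s+ℓ-1}τ(φ), ∇̄_{e_j}Δ̄^{s-ℓ-1}τ(φ))dφ(e_j) )
  - R^N(∇̄_{e_j}Δ̄^{s-1}τ(φ), Δ̄^{s-1}τ(φ))dφ(e_j)`. -/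
def tauK (P : ChartData m n) (φ : (Fin m → ℝ) → Fin n → ℝ) (k : ℕ) (x : Fin m → ℝ)
    (α : Fin n) : ℝ :=
  if Even k then
    uvar P φ (k-1) x α - trRphi P φ (uvar P φ (k-2)) x α
      - ∑ ℓ ∈ Finset.Icc 1 (k/2 - 1),
          (trRD P φ (uvar P φ (k/2 + ℓ - 2)) (uvar P φ (k/2 - ℓ - 1)) x α
            - trRD2 P φ (uvar P φ (k/2 + ℓ - 2)) (uvar P φ (k/2 - ℓ - 1)) x α)
  else
    uvar P φ (k-1) x α - trRphi P φ (uvar P φ (k-2)) x α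
      - (∑ ℓ ∈ Finset.Icc 1 (k/2 - 1),
          (trRD P φ (uvar P φ (k/2 + ℓ - 1)) (uvar P φ (k/2 - ℓ - 1)) x α
            - trRD2 P φ (uvar P φ (k/2 + ℓ - 1)) (uvar P φ (k/2 - ℓ - 1)) x α))
      - trRD P φ (uvar P φ (k/2 - 1)) (uvar P φ (k/2 - 1)) x α

/-- Components `(∇dφ)(∂_i,∂_j)^α` of the second fundamental form of `φ`. -/
def sff (P : ChartData m n) (φ : (Fin m → ℝ) → Fin n → ℝ) (x : Fin m → ℝ)
    (i j : Fin m) (α : Fin n) : ℝ :=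
  pd i (fun z => dphi φ z j α) x - (∑ k, P.ΓM x k i j * dphi φ x k α)
    + ∑ β, ∑ γ, P.ΓN (φ x) α β γ * dphi φ x i β * dphi φ x j γ

/-- `E^α_{βδϑη} = R^α_{βγδ}Γ^γ_{ϑη} + R^α_{βγϑ}Γ^γ_{δη}`. -/
def Ecoef (P : ChartData m n) (y : Fin n → ℝ) (α β δ ϑ η : Fin n) : ℝ :=
  ∑ γ, (Rc P y α β γ δ * P.ΓN y γ ϑ η + Rc P y α β γ ϑ * P.ΓN y γ δ η)

/-- `⟨v^γ, dφ^β⟩ = g^{ij} v_i^γ φ_j^β`. -/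
def vpair (P : ChartData m n) (φ : (Fin m → ℝ) → Fin n → ℝ) (v : Fin m → Fin n → ℝ)
    (x : Fin m → ℝ) (γ β : Fin n) : ℝ :=
  ∑ i, ∑ j, P.ginv x i j * v i γ * dphi φ x j β

/-- The explicit local right-hand side `F^k` of the polyharmonic map equation
`Δu_{k-2}^α = (F^k)^α` for even order `k = 2s ≥ 4`:
`(F^k)^α = -A_{k-1}^α - u_{k-2}^δ⟨dφ^γ,dφ^β⟩R^α_{βγδ}
 + Σ_{ℓ=1}^{k/2-1}( u^δ_{k/2-ℓ-1}⟨v^γ_{k/2+ℓ-2},dφ^β⟩R^α_{βγδ}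
   + u^ϑ_{k/2+ℓ-2}u^δ_{k/2-ℓ-1}⟨dφ^η,dφ^β⟩E^α_{βδϑη}
   + u^δ_{k/2+ℓ-2}⟨v^γ_{k/2-ℓ-1},dφ^β⟩R^α_{βγδ} )`. -/
def FkEven (P : ChartData m n) (φ : (Fin m → ℝ) → Fin n → ℝ) (k : ℕ) (x : Fin m → ℝ)
    (α : Fin n) : ℝ :=
  -Asec P φ (uvar P φ (k-2)) x α
    - (∑ δ, ∑ γ, ∑ β, uvar P φ (k-2) x δ * dpair P φ φ x γ β * Rc P (φ x) α β γ δ)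
    + ∑ ℓ ∈ Finset.Icc 1 (k/2 - 1),
        ((∑ δ, ∑ γ, ∑ β, uvar P φ (k/2 - ℓ - 1) x δ *
            vpair P φ (vvar P φ (k/2 + ℓ - 2) x) x γ β * Rc P (φ x) α β γ δ)
          + (∑ ϑ, ∑ δ, ∑ η, ∑ β, uvar P φ (k/2 + ℓ - 2) x ϑ * uvar P φ (k/2 - ℓ - 1) x δ *
              dpair P φ φ x η β * Ecoef P (φ x) α β δ ϑ η)
          + ∑ δ, ∑ γ, ∑ β, uvar P φ (k/2 + ℓ - 2) x δ *
              vpair P φ (vvar P φ (k/2 - ℓ - 1) x) x γ β * Rc P (φ x) α β γ δ)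

/-! After eliminating `Δφ` through the tension field `u₀ = τ(φ)`, the right-hand side `F^k(x)`
is a fixed smooth function of the finite jet `(x, φ, dφ, u₀, …, u_{k-2}, v₀, …, v_{k-2})` of `φ`
at `x`. The jets of `φ` and `φ̃` are continuous, so over the compact set `closure D` they stay in a
closed ball, on which a `C¹` function is Lipschitz; read componentwise, that Lipschitz bound is
the estimate. -/

lemma vnorm_nonneg {ι : Type} [Fintype ι] (f : ι → ℝ) : 0 ≤ vnorm f :=
  Real.sqrt_nonneg _

lemma norm_le_vnorm {ι : Type} [Fintype ι] (f : ι → ℝ) : ‖f‖ ≤ vnorm f := by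
  refine (pi_norm_le_iff_of_nonneg (vnorm_nonneg f)).2 fun i => ?_
  rw [Real.norm_eq_abs, ← Real.sqrt_sq_eq_abs]
  exact Real.sqrt_le_sqrt (Finset.single_le_sum (fun j _ => sq_nonneg (f j)) (Finset.mem_univ i))

theorem ContDiff.exists_norm_sub_le_of_isCompact {X E F : Type*} [TopologicalSpace X]
    [NormedAddCommGroup E] [NormedSpace ℝ E] [ProperSpace E]
    [NormedAddCommGroup F] [NormedSpace ℝ F] {G : E → F} (hG : ContDiff ℝ 1 G)
    {K : Set X} (hK : IsCompact K) {a b : X → E} (ha : ContinuousOn a K)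
    (hb : ContinuousOn b K) :
    ∃ C : NNReal, ∀ x ∈ K, ‖G (a x) - G (b x)‖ ≤ C * ‖a x - b x‖ := by
  obtain ⟨Ra, hRa⟩ := hK.exists_bound_of_continuousOn ha
  obtain ⟨Rb, hRb⟩ := hK.exists_bound_of_continuousOn hb
  obtain ⟨C, hC⟩ := hG.contDiffOn.exists_lipschitzOnWith one_ne_zero
    (convex_closedBall (0 : E) (max Ra Rb)) (isCompact_closedBall _ _)
  refine ⟨C, fun x hx => ?_⟩
  simpa only [dist_eq_norm] using hC.dist_le_mul (a x)
    (mem_closedBall_zero_iff.2 ((hRa x hx).trans (le_max_left _ _))) (b x)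
    (mem_closedBall_zero_iff.2 ((hRb x hx).trans (le_max_right _ _)))

section Smoothness

variable {P : ChartData m n} {φ : (Fin m → ℝ) → Fin n → ℝ}

@[fun_prop]
lemma contDiff_pd {d : ℕ} {i : Fin d} {f : (Fin d → ℝ) → ℝ}
    (hf : ContDiff ℝ (⊤ : ℕ∞) f) : ContDiff ℝ (⊤ : ℕ∞) (pd i f) :=
  (hf.fderiv_right (by simp)).clm_apply contDiff_const

@[fun_prop]
lemma contDiff_ginv (hP : P.SmoothDomain) (i j : Fin m) :
    ContDiff ℝ (⊤ : ℕ∞) fun x => P.ginv x i j :=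
  hP.1 i j

@[fun_prop]
lemma contDiff_ΓM (hP : P.SmoothDomain) (k i j : Fin m) :
    ContDiff ℝ (⊤ : ℕ∞) fun x => P.ΓM x k i j :=
  hP.2 k i j

@[fun_prop]
lemma contDiff_ΓN (hP : P.SmoothTarget) (α β γ : Fin n) :
    ContDiff ℝ (⊤ : ℕ∞) fun y => P.ΓN y α β γ :=
  hP α β γ

@[fun_prop]
lemma contDiff_lap (hP : P.SmoothDomain) {f : (Fin m → ℝ) → ℝ}
    (hf : ContDiff ℝ (⊤ : ℕ∞) f) : ContDiff ℝ (⊤ : ℕ∞) (lap P f) := by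
  unfold lap
  fun_prop (disch := assumption)

@[fun_prop]
lemma contDiff_Rc (hP : P.SmoothTarget) (α δ β γ : Fin n) :
    ContDiff ℝ (⊤ : ℕ∞) (fun y => Rc P y α δ β γ) := by
  unfold Rc
  fun_prop (disch := assumption)

@[fun_prop]
lemma contDiff_Scoef (hP : P.SmoothTarget) (α β ω ϑ : Fin n) :
    ContDiff ℝ (⊤ : ℕ∞) (fun y => Scoef P y α β ω ϑ) := by
  unfold Scoef
  fun_prop (disch := assumption)

@[fun_prop]
lemma contDiff_Ecoef (hP : P.SmoothTarget) (α β δ ϑ η : Fin n) :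
    ContDiff ℝ (⊤ : ℕ∞) (fun y => Ecoef P y α β δ ϑ η) := by
  unfold Ecoef
  fun_prop (disch := assumption)

lemma contDiff_tension (hPdom : P.SmoothDomain) (hPtar : P.SmoothTarget)
    (hφ : ContDiff ℝ (⊤ : ℕ∞) φ) (α : Fin n) :
    ContDiff ℝ (⊤ : ℕ∞) (fun x => tension P φ x α) := by
  unfold tension dphi
  fun_prop (disch := assumption)

lemma contDiff_Asec (hPdom : P.SmoothDomain) (hPtar : P.SmoothTarget)
    (hφ : ContDiff ℝ (⊤ : ℕ∞) φ) {σ : (Fin m → ℝ) → Fin n → ℝ} (hσ : ContDiff ℝ (⊤ : ℕ∞) σ)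
    (α : Fin n) : ContDiff ℝ (⊤ : ℕ∞) (fun x => Asec P φ σ x α) := by
  unfold Asec Aop dphi
  fun_prop (disch := assumption)

lemma contDiff_uvar (hPdom : P.SmoothDomain) (hPtar : P.SmoothTarget)
    (hφ : ContDiff ℝ (⊤ : ℕ∞) φ) (j : ℕ) : ContDiff ℝ (⊤ : ℕ∞) (uvar P φ j) := by
  induction j with
  | zero => exact contDiff_pi.2 (contDiff_tension hPdom hPtar hφ)
  | succ j ih =>
    exact contDiff_pi.2 fun α =>
      (contDiff_lap hPdom (contDiff_pi.1 ih α)).add (contDiff_Asec hPdom hPtar hφ ih α)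

end Smoothness

section Jet

/-- The indices `0, …, k-2` of the `u`- and `v`-slots form `Fin (k - 2 + 1)` rather than
`Fin (k - 1)`, so that `Fin.ofNat` is available for every `k`. -/
abbrev Jet (m n k : ℕ) : Type :=
  (Fin m → ℝ) × (Fin n → ℝ) × (Fin m × Fin n → ℝ) ×
    (Fin (k - 2 + 1) → Fin n → ℝ) × (Fin (k - 2 + 1) → Fin m × Fin n → ℝ)

def jet (P : ChartData m n) (φ : (Fin m → ℝ) → Fin n → ℝ) (k : ℕ) (x : Fin m → ℝ) :
    Jet m n k :=
  (x, φ x, fun p => dphi φ x p.1 p.2, fun l β => uvar P φ l x β,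
    fun l p => vvar P φ l x p.1 p.2)

def FkJet (P : ChartData m n) (k : ℕ) (α : Fin n) (q : Jet m n k) : ℝ :=
  let x := q.1
  let y := q.2.1
  let p := q.2.2.1
  let u (l : ℕ) := q.2.2.2.1 (Fin.ofNat _ l)
  let v (l : ℕ) := q.2.2.2.2 (Fin.ofNat _ l)
  -- `Δφ^β`, read off from `u₀ = τ(φ)`
  let lapφ (β : Fin n) : ℝ :=
    (∑ i, ∑ j, ∑ ϑ, ∑ η, P.ginv x i j * P.ΓN y β ϑ η * p (i, ϑ) * p (j, η)) - u 0 β;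
  -((∑ ϑ, ∑ i, v (k - 2) (i, ϑ) * (-2 * ∑ j, ∑ β, P.ginv x i j * p (j, β) * P.ΓN y α β ϑ))
      + ∑ ϑ, u (k - 2) ϑ * ((∑ β, lapφ β * P.ΓN y α β ϑ)
        - ∑ i, ∑ j, ∑ β, ∑ ω, P.ginv x i j * p (j, β) * p (i, ω) * Scoef P y α β ω ϑ))
    - (∑ δ, ∑ γ, ∑ β, u (k - 2) δ *
        (∑ i, ∑ j, P.ginv x i j * p (i, γ) * p (j, β)) * Rc P y α β γ δ)
    + ∑ ℓ ∈ Finset.Icc 1 (k / 2 - 1),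
        ((∑ δ, ∑ γ, ∑ β, u (k / 2 - ℓ - 1) δ *
            (∑ i, ∑ j, P.ginv x i j * v (k / 2 + ℓ - 2) (i, γ) * p (j, β)) * Rc P y α β γ δ)
          + (∑ ϑ, ∑ δ, ∑ η, ∑ β, u (k / 2 + ℓ - 2) ϑ * u (k / 2 - ℓ - 1) δ *
              (∑ i, ∑ j, P.ginv x i j * p (i, η) * p (j, β)) * Ecoef P y α β δ ϑ η)
          + ∑ δ, ∑ γ, ∑ β, u (k / 2 + ℓ - 2) δ *
              (∑ i, ∑ j, P.ginv x i j * v (k / 2 - ℓ - 1) (i, γ) * p (j, β)) *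
              Rc P y α β γ δ)

variable {P : ChartData m n} {φ : (Fin m → ℝ) → Fin n → ℝ}

lemma lap_eq_sub_uvar_zero (x : Fin m → ℝ) (β : Fin n) :
    lap P (fun z => φ z β) x = (∑ i, ∑ j, ∑ ϑ, ∑ η,
      P.ginv x i j * P.ΓN (φ x) β ϑ η * dphi φ x i ϑ * dphi φ x j η) - uvar P φ 0 x β := by
  simp only [uvar, tension]
  ring

lemma FkEven_eq_FkJet (k : ℕ) (x : Fin m → ℝ) (α : Fin n) :
    FkEven P φ k x α = FkJet P k α (jet P φ k x) := by
  have val_ofNat : ∀ l : ℕ, l ≤ k - 2 → (Fin.ofNat (k - 2 + 1) l : ℕ) = l := fun l hl =>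
    Nat.mod_eq_of_lt (Nat.lt_succ_of_le hl)
  simp only [FkJet, FkEven, jet, Asec, Aop, dpair, vpair, vvar, lap_eq_sub_uvar_zero,
    val_ofNat _ le_rfl, val_ofNat 0 (Nat.zero_le _)]
  congr 1
  refine Finset.sum_congr rfl fun ℓ hℓ => ?_
  rw [Finset.mem_Icc] at hℓ
  rw [val_ofNat (k / 2 + ℓ - 2) (by omega), val_ofNat (k / 2 - ℓ - 1) (by omega)]

lemma contDiff_FkJet (hPdom : P.SmoothDomain) (hPtar : P.SmoothTarget) (k : ℕ) (α : Fin n) :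
    ContDiff ℝ (⊤ : ℕ∞) (FkJet P k α) := by
  unfold FkJet
  simp only
  fun_prop (disch := assumption)

lemma continuous_jet (hPdom : P.SmoothDomain) (hPtar : P.SmoothTarget)
    (hφ : ContDiff ℝ (⊤ : ℕ∞) φ) (k : ℕ) : Continuous (jet P φ k) := by
  have := contDiff_uvar hPdom hPtar hφ
  unfold jet vvar dphi
  fun_prop

lemma norm_jet_sub_le {k : ℕ} (hk : 2 ≤ k) (φ ψ : (Fin m → ℝ) → Fin n → ℝ) (x : Fin m → ℝ) :
    ‖jet P φ k x - jet P ψ k x‖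
      ≤ vnorm (fun α : Fin n => φ x α - ψ x α)
          + vnorm (fun p : Fin m × Fin n => dphi φ x p.1 p.2 - dphi ψ x p.1 p.2)
          + (∑ l ∈ Finset.range (k - 1),
              vnorm (fun α : Fin n => uvar P φ l x α - uvar P ψ l x α))
          + (∑ l ∈ Finset.range (k - 2),
              vnorm (fun p : Fin m × Fin n => vvar P φ l x p.1 p.2 - vvar P ψ l x p.1 p.2))
          + vnorm (fun p : Fin m × Fin n =>
              vvar P φ (k - 2) x p.1 p.2 - vvar P ψ (k - 2) x p.1 p.2) := by
  set u : ℕ → ℝ := fun l => vnorm fun α : Fin n => uvar P φ l x α - uvar P ψ l x α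
  set v : ℕ → ℝ := fun l =>
    vnorm fun p : Fin m × Fin n => vvar P φ l x p.1 p.2 - vvar P ψ l x p.1 p.2
  have le_sum : ∀ w : ℕ → ℝ, (∀ l, 0 ≤ w l) →
      ∀ l : Fin (k - 2 + 1), w l ≤ ∑ l ∈ Finset.range (k - 1), w l := fun w hw l =>
    Finset.single_le_sum (fun l _ => hw l) (Finset.mem_range.2 (by omega))
  have v_split :
      ∑ l ∈ Finset.range (k - 1), v l = ∑ l ∈ Finset.range (k - 2), v l + v (k - 2) := by
    rw [show k - 1 = k - 2 + 1 by omega, Finset.sum_range_succ]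
  have := vnorm_nonneg fun α : Fin n => φ x α - ψ x α
  have := vnorm_nonneg fun p : Fin m × Fin n => dphi φ x p.1 p.2 - dphi ψ x p.1 p.2
  have : 0 ≤ v (k - 2) := vnorm_nonneg _
  have : 0 ≤ ∑ l ∈ Finset.range (k - 1), u l := Finset.sum_nonneg fun _ _ => vnorm_nonneg _
  have : 0 ≤ ∑ l ∈ Finset.range (k - 2), v l := Finset.sum_nonneg fun _ _ => vnorm_nonneg _
  simp only [jet, Prod.mk_sub_mk, norm_prod_le_iff]
  refine ⟨?_, ?_, ?_, ?_, ?_⟩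
  · rw [sub_self, norm_zero]
    linarith
  · exact (norm_le_vnorm fun α : Fin n => φ x α - ψ x α).trans (by linarith)
  · exact (norm_le_vnorm fun p : Fin m × Fin n => dphi φ x p.1 p.2 - dphi ψ x p.1 p.2).trans
      (by linarith)
  · refine (pi_norm_le_iff_of_nonneg (by linarith)).2 fun l => ?_
    exact (norm_le_vnorm _).trans ((le_sum u (fun _ => vnorm_nonneg _) l).trans (by linarith))
  · refine (pi_norm_le_iff_of_nonneg (by linarith)).2 fun l => ?_
    exact (norm_le_vnorm _).trans ((le_sum v (fun _ => vnorm_nonneg _) l).trans (by linarith))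

end Jet

theorem estimate_Fk_difference_general
    {m n : ℕ} (P : ChartData m n)
    (hPdom : P.SmoothDomain) (hPtar : P.SmoothTarget)
    (φ ψ : (Fin m → ℝ) → Fin n → ℝ)
    (hφ : ContDiff ℝ (⊤ : ℕ∞) φ) (hψ : ContDiff ℝ (⊤ : ℕ∞) ψ)
    (k : ℕ) (hk : 4 ≤ k)
    (D : Set (Fin m → ℝ)) (hDcpt : IsCompact (closure D)) :
    ∃ C > 0, ∀ x ∈ D, ∀ α : Fin n,
      |FkEven P φ k x α - FkEven P ψ k x α|
        ≤ C * (vnorm (fun α : Fin n => φ x α - ψ x α)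
          + vnorm (fun p : Fin m × Fin n => dphi φ x p.1 p.2 - dphi ψ x p.1 p.2)
          + (∑ l ∈ Finset.range (k-1),
              vnorm (fun α : Fin n => uvar P φ l x α - uvar P ψ l x α))
          + (∑ l ∈ Finset.range (k-2),
              vnorm (fun p : Fin m × Fin n => vvar P φ l x p.1 p.2 - vvar P ψ l x p.1 p.2))
          + vnorm (fun p : Fin m × Fin n =>
              vvar P φ (k-2) x p.1 p.2 - vvar P ψ (k-2) x p.1 p.2)) := by
  have hF : ContDiff ℝ 1 fun q α => FkJet P k α q :=
    (contDiff_pi.2 fun α => contDiff_FkJet hPdom hPtar k α).of_le (by exact_mod_cast le_top)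
  obtain ⟨C, hC⟩ := ContDiff.exists_norm_sub_le_of_isCompact hF hDcpt
    (continuous_jet hPdom hPtar hφ k).continuousOn (continuous_jet hPdom hPtar hψ k).continuousOn
  refine ⟨C + 1, by positivity, fun x hx α => ?_⟩
  calc |FkEven P φ k x α - FkEven P ψ k x α|
      = ‖FkJet P k α (jet P φ k x) - FkJet P k α (jet P ψ k x)‖ := by
        rw [FkEven_eq_FkJet, FkEven_eq_FkJet, Real.norm_eq_abs]
    _ ≤ C * ‖jet P φ k x - jet P ψ k x‖ :=
        (norm_le_pi_norm (_ : Fin n → ℝ) α).trans (hC x (subset_closure hx))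
    _ ≤ (C + 1) * _ :=
        mul_le_mul (by linarith) (norm_jet_sub_le (by omega) φ ψ x) (norm_nonneg _)
          (by positivity)

/-- (Lemma 2.7 of the paper.)
Let `φ, φ̃ : M → N` be two polyharmonic maps of even order `k = 2s ≥ 4` with local
right-hand sides `F^k` and `F̃^k`. Then on any open set `D` with compact closure
contained in the chart domain `U` there exists `C > 0` with
`|(F^k)^α - (F̃^k)^α| ≤ C( |φ-φ̃| + |dφ-dφ̃| + Σ_{ℓ=0}^{k-2}|u_ℓ-ũ_ℓ|
  + Σ_{ℓ=0}^{k-3}|v_ℓ-ṽ_ℓ| + |∇u_{k-2}-∇ũ_{k-2}| )`. -/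
theorem estimate_Fk_difference
    {m n : ℕ} (P : ChartData m n)
    (hPdom : P.SmoothDomain) (hPtar : P.SmoothTarget) (hPriem : P.Riemannian)
    (U : Set (Fin m → ℝ)) (hUopen : IsOpen U)
    (φ ψ : (Fin m → ℝ) → Fin n → ℝ)
    (hφ : ContDiff ℝ (⊤ : ℕ∞) φ) (hψ : ContDiff ℝ (⊤ : ℕ∞) ψ)
    (k : ℕ) (hk : 4 ≤ k) (hkeven : Even k)
    (hpolyφ : ∀ (x : Fin m → ℝ) (α : Fin n), tauK P φ k x α = 0)
    (hpolyψ : ∀ (x : Fin m → ℝ) (α : Fin n), tauK P ψ k x α = 0)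
    (D : Set (Fin m → ℝ)) (hDopen : IsOpen D) (hDcpt : IsCompact (closure D))
    (hDsub : closure D ⊆ U) :
    ∃ C > 0, ∀ x ∈ D, ∀ α : Fin n,
      |FkEven P φ k x α - FkEven P ψ k x α|
        ≤ C * (vnorm (fun α : Fin n => φ x α - ψ x α)
          + vnorm (fun p : Fin m × Fin n => dphi φ x p.1 p.2 - dphi ψ x p.1 p.2)
          + (∑ l ∈ Finset.range (k-1),
              vnorm (fun α : Fin n => uvar P φ l x α - uvar P ψ l x α))
          + (∑ l ∈ Finset.range (k-2),
              vnorm (fun p : Fin m × Fin n => vvar P φ l x p.1 p.2 - vvar P ψ l x p.1 p.2))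
          + vnorm (fun p : Fin m × Fin n =>
              vvar P φ (k-2) x p.1 p.2 - vvar P ψ (k-2) x p.1 p.2)) :=
  estimate_Fk_difference_general P hPdom hPtar φ ψ hφ hψ k hk D hDcpt

end Polyharm
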